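/- arXiv:2201.02887 — 8 statements merged into one kernel-verified Lean document; each statement's English description precedes it below -/
import Mathlib

section
/- Let n, k be positive integers with k < n/2. If F is an intersecting family of k-element subsets of {1,...,n} with |F| = C(n-1, k-1), then there exists an element i ∈ {1,...,n} such that F = {S : S is a k-subset of [n] and i ∈ S}. -/
/-!
Katona's cycle method. An arrangement of the ground set around a cycle is a bijection
`σ : ZMod n ≃ α`; its arcs are the images of windows, the sets of `k` consecutive positions.
When `2k ≤ n` an intersecting family contains at most `k` arcs of any arrangement, and double
counting the pairs (arrangement, arc in `F`) shows that a family of size `C(n-1, k-1)` contains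
exactly `k` arcs of every arrangement. When `2k < n`, `k` pairwise meeting arcs are precisely the
arcs through one position, the center of the arrangement.

Normalise an arrangement so that its center is position `0`, holding the element `x`. Swapping two
positions that lie on the same side of two well-chosen windows leaves the two corresponding arcs
unchanged, and these two arcs pin the center of the new arrangement to `0` again. Such swaps can
trade any element of the arc starting at `0` (other than `x`) for any element outside it, so every
`k`-set through `x` becomes an arc through the center of some arrangement and lies in `F`. Finally
a member of `F` missing `x` would be disjoint from some `k`-set through `x`.
-/

open Finset

namespace ZMod

variable {n : ℕ} [NeZero n]

lemma val_add_eq_ite (a b : ZMod n) :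
    (a + b).val = if n ≤ a.val + b.val then a.val + b.val - n else a.val + b.val := by
  split_ifs with h
  · exact val_add_of_le h
  · exact val_add_of_lt (by omega)

lemma val_sub_eq_ite (a b : ZMod n) :
    (a - b).val = if b.val ≤ a.val then a.val - b.val else a.val + n - b.val := by
  have h := val_add_eq_ite (a - b) b
  rw [sub_add_cancel] at h
  have := (a - b).val_lt
  split_ifs at h ⊢ <;> omega

end ZMod

namespace Katona

open ZMod (val_add_eq_ite val_sub_eq_ite val_cast_of_lt)

variable {n k : ℕ} [NeZero n]

def window (k : ℕ) (t : ZMod n) : Finset (ZMod n) := {s | (s - t).val < k}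

@[simp] lemma mem_window {s t : ZMod n} : s ∈ window k t ↔ (s - t).val < k := by
  simp [window]

lemma card_window (hkn : k ≤ n) (t : ZMod n) : #(window k t) = k := by
  rw [← card_range k]
  refine card_nbij' (fun s => (s - t).val) (fun j => t + j) ?_ ?_ ?_ ?_
  · intro s hs
    simpa using hs
  · intro j hj
    simp only [coe_range, Set.mem_Iio] at hj
    simp [val_cast_of_lt (hj.trans_le hkn), hj]
  · intro s _
    simp
  · intro j hj
    simp only [coe_range, Set.mem_Iio] at hj
    simp [val_cast_of_lt (hj.trans_le hkn)]

lemma card_filter_mem_window (hkn : k ≤ n) (c : ZMod n) : #{t | c ∈ window k t} = k := by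
  rw [card_equiv (Equiv.subLeft c) (t := window k 0) (by simp), card_window hkn]

lemma disjoint_window_add {d : ℕ} (hd : k ≤ d) (hdn : d + k ≤ n) (t : ZMod n) :
    Disjoint (window k t) (window k (t + d)) := by
  rw [disjoint_left]
  intro s hs hs'
  rw [mem_window] at hs hs'
  have := s.val_lt
  have := t.val_lt
  simp only [val_sub_eq_ite, val_add_eq_ite, val_cast_of_lt (by omega : d < n)] at hs hs'
  split_ifs at hs hs' <;> omega

lemma add_mem_window_of_not_disjoint {t t' : ZMod n} (hkn : 2 * k ≤ n)
    (h : ¬Disjoint (window k t) (window k t')) (ht' : t' ∉ window k t) :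
    t' + k ∈ window k t := by
  obtain ⟨s, hs, hs'⟩ := not_disjoint_iff.1 h
  have := s.val_lt
  have := t.val_lt
  have := t'.val_lt
  simp only [mem_window, val_sub_eq_ite, val_add_eq_ite, val_cast_of_lt (by omega : k < n)]
    at hs hs' ht' ⊢
  split_ifs at hs hs' ht' ⊢ <;> omega

lemma mem_window_zero {s : ZMod n} : s ∈ window k 0 ↔ s.val < k := by
  rw [mem_window, sub_zero]

lemma mem_window_one (hk : 0 < k) (hkn : k < n) {s : ZMod n} :
    s ∈ window k 1 ↔ 1 ≤ s.val ∧ s.val ≤ k := by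
  have := s.val_lt
  simp only [mem_window, val_sub_eq_ite, ZMod.val_one_eq_one_mod,
    Nat.mod_eq_of_lt (by omega : 1 < n)]
  split_ifs <;> omega

lemma mem_window_neg (hkn : k < n) {s : ZMod n} :
    s ∈ window k (-(k : ZMod n)) ↔ n - k ≤ s.val := by
  have := s.val_lt
  simp only [mem_window, sub_neg_eq_add, val_add_eq_ite, val_cast_of_lt hkn]
  split_ifs <;> omega

lemma mem_window_one_sub (hk : 0 < k) (hkn : k < n) {s : ZMod n} :
    s ∈ window k (1 - (k : ZMod n)) ↔ s.val = 0 ∨ n - k < s.val := by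
  have := s.val_lt
  simp only [mem_window, val_sub_eq_ite, ZMod.val_one_eq_one_mod,
    Nat.mod_eq_of_lt (by omega : 1 < n), val_cast_of_lt hkn]
  split_ifs <;> omega

lemma val_neg_natCast (hk : 0 < k) (hkn : k < n) : (-(k : ZMod n)).val = n - k := by
  have := val_sub_eq_ite 0 (k : ZMod n)
  simp only [zero_sub, ZMod.val_zero, val_cast_of_lt hkn] at this
  split_ifs at this <;> omega

/-! A position is determined by which of two suitable windows contain it: the windows at `1 - k`
and `-k` (the left boundary of the windows through `0`), at `0` and `1` (the right boundary), or at
`1 - k` and `0` (the two extreme windows through `0`). -/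

lemma eq_zero_of_iff_window_one_sub_neg (hk : 0 < k) (hkn : k < n) {c : ZMod n}
    (h₁ : c ∈ window k (1 - (k : ZMod n)) ↔ (0 : ZMod n) ∈ window k (1 - (k : ZMod n)))
    (h₂ : c ∈ window k (-(k : ZMod n)) ↔ (0 : ZMod n) ∈ window k (-(k : ZMod n))) :
    c = 0 := by
  simp only [mem_window_one_sub hk hkn, mem_window_neg hkn, ZMod.val_zero, true_or, iff_true]
    at h₁ h₂
  rw [← ZMod.val_eq_zero]
  omega

lemma eq_zero_of_iff_window_zero_one (hk : 0 < k) (hkn : k < n) {c : ZMod n}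
    (h₁ : c ∈ window k 0 ↔ (0 : ZMod n) ∈ window k 0)
    (h₂ : c ∈ window k 1 ↔ (0 : ZMod n) ∈ window k 1) : c = 0 := by
  simp only [mem_window_zero, mem_window_one hk hkn, ZMod.val_zero, zero_lt_iff, ne_eq] at h₁ h₂
  rw [← ZMod.val_eq_zero]
  omega

lemma eq_zero_of_iff_window_one_sub_zero (hk : 0 < k) (hkn : 2 * k < n) {c : ZMod n}
    (h₁ : c ∈ window k (1 - (k : ZMod n)) ↔ (0 : ZMod n) ∈ window k (1 - (k : ZMod n)))
    (h₂ : c ∈ window k 0 ↔ (0 : ZMod n) ∈ window k 0) : c = 0 := by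
  simp only [mem_window_one_sub hk (by omega : k < n), mem_window_zero, ZMod.val_zero, true_or,
    iff_true] at h₁ h₂
  rw [← ZMod.val_eq_zero]
  omega

/-- Katona's folding: a window meeting the window at `t₀` either starts inside it or ends inside
it, and in the second case moving it `k` steps forward makes it start inside. -/
def fold (k : ℕ) (t₀ t : ZMod n) : ZMod n := if t ∈ window k t₀ then t else t + k

section PairwiseMeeting

variable {T : Finset (ZMod n)}
  (hT : ∀ t ∈ T, ∀ t' ∈ T, ¬Disjoint (window k t) (window k t'))
include hT

lemma fold_mem_window (hkn : 2 * k ≤ n) {t₀ t : ZMod n} (ht₀ : t₀ ∈ T) (ht : t ∈ T) :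
    fold k t₀ t ∈ window k t₀ := by
  unfold fold
  split_ifs with h
  · exact h
  · exact add_mem_window_of_not_disjoint hkn (hT _ ht₀ _ ht) h

lemma fold_injOn (hkn : 2 * k ≤ n) (t₀ : ZMod n) : Set.InjOn (fold k t₀) T := by
  have hne : ∀ t ∈ T, ∀ t' ∈ T, t ≠ t' + k := by
    rintro t ht t' ht' rfl
    exact hT _ ht' _ ht (disjoint_window_add le_rfl (by omega) t')
  intro t ht t' ht' h
  unfold fold at h
  split_ifs at h
  · exact h
  · exact absurd h (hne t ht t' ht')
  · exact absurd h.symm (hne t' ht' t ht)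
  · exact add_right_cancel h

lemma card_le_of_pairwise_not_disjoint (hkn : 2 * k ≤ n) : #T ≤ k := by
  obtain rfl | ⟨t₀, ht₀⟩ := T.eq_empty_or_nonempty
  · simp
  calc #T ≤ #(window k t₀) := card_le_card_of_injOn _
        (fun t ht => fold_mem_window hT hkn ht₀ ht) (fold_injOn hT hkn t₀)
    _ = k := card_window (by omega) t₀

variable (hTk : #T = k) {t₀ : ZMod n} (ht₀ : t₀ ∈ T)
include hTk ht₀

lemma mem_or_sub_mem_of_mem_window (hkn : 2 * k ≤ n) {s : ZMod n} (hs : s ∈ window k t₀) :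
    s ∈ T ∨ s - k ∈ T := by
  obtain ⟨t, ht, rfl⟩ := surj_on_of_inj_on_of_card_le (fun t _ => fold k t₀ t)
    (fun t ht => fold_mem_window hT hkn ht₀ ht)
    (fun t t' ht ht' h => fold_injOn hT hkn t₀ ht ht' h)
    (by rw [card_window (by omega), hTk]) s hs
  unfold fold
  split_ifs
  · exact .inl ht
  · exact .inr (by simpa using ht)

lemma add_natCast_mem_of_succ_mem (hkn : 2 * k < n) {j : ℕ} (hj : j + 1 < k)
    (h : t₀ + ((j + 1 : ℕ) : ZMod n) ∈ T) : t₀ + (j : ZMod n) ∈ T := by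
  by_contra h'
  have hmem : t₀ + (j : ZMod n) ∈ window k t₀ := by
    simp [val_cast_of_lt (by omega : j < n), (by omega : j < k)]
  have hsub := (mem_or_sub_mem_of_mem_window hT hTk ht₀ hkn.le hmem).resolve_left h'
  have hd := disjoint_window_add (k := k) (d := k + 1) (by omega) (by omega)
    (t₀ + (j : ZMod n) - (k : ZMod n))
  have e : t₀ + (j : ZMod n) - (k : ZMod n) + ((k + 1 : ℕ) : ZMod n) =
      t₀ + ((j + 1 : ℕ) : ZMod n) := by
    push_cast; ring
  exact hT _ hsub _ h (e ▸ hd)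

lemma add_natCast_mem_of_le (hkn : 2 * k < n) {i j : ℕ} (hij : i ≤ j) (hjk : j < k)
    (h : t₀ + (j : ZMod n) ∈ T) : t₀ + (i : ZMod n) ∈ T := by
  induction j, hij using Nat.le_induction with
  | base => exact h
  | succ j _ ih => exact ih (by omega) (add_natCast_mem_of_succ_mem hT hTk ht₀ hkn hjk h)

end PairwiseMeeting

/-- By folding, every `t ∈ T` is `t₀ + j` or `t₀ + j - k` with `j < k`. The `j` of the first
kind form an initial segment `j ≤ m` and those of the second kind exceed `m`, so `T` consists of
the windows through `t₀ + m`. -/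
lemma exists_forall_mem_iff_mem_window {T : Finset (ZMod n)}
    (hT : ∀ t ∈ T, ∀ t' ∈ T, ¬Disjoint (window k t) (window k t')) (hkn : 2 * k < n)
    (hTk : #T = k) : ∃ c, ∀ t, t ∈ T ↔ c ∈ window k t := by
  obtain rfl | ⟨t₀, ht₀⟩ := T.eq_empty_or_nonempty
  · exact ⟨0, by simp [← hTk]⟩
  have hk : 0 < k := hTk ▸ card_pos.2 ⟨t₀, ht₀⟩
  set m := Nat.findGreatest (fun j => t₀ + (j : ZMod n) ∈ T) (k - 1)
  have hmk : m < k := by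
    have := Nat.findGreatest_le (P := fun j => t₀ + (j : ZMod n) ∈ T) (k - 1)
    omega
  have hm : t₀ + (m : ZMod n) ∈ T :=
    Nat.findGreatest_spec (P := fun j => t₀ + (j : ZMod n) ∈ T) (Nat.zero_le _)
      (by simpa using ht₀)
  suffices hsub : T ⊆ ({t | t₀ + (m : ZMod n) ∈ window k t} : Finset (ZMod n)) by
    have := eq_of_subset_of_card_le hsub (by rw [card_filter_mem_window (by omega), hTk])
    exact ⟨t₀ + m, fun t => by rw [this, mem_filter, and_iff_right (mem_univ t)]⟩
  intro t ht
  rw [mem_filter, and_iff_right (mem_univ t)]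
  have := t.val_lt
  have := t₀.val_lt
  by_cases h : t ∈ window k t₀
  · have hj : t₀ + ((t - t₀).val : ZMod n) ∈ T := by simpa using ht
    have hjm : (t - t₀).val ≤ m := Nat.le_findGreatest (by rw [mem_window] at h; omega) hj
    simp only [mem_window, val_sub_eq_ite, val_add_eq_ite, val_cast_of_lt (by omega : m < n)]
      at h hjm ⊢
    split_ifs at h hjm ⊢ <;> omega
  · have h' := add_mem_window_of_not_disjoint hkn.le (hT _ ht₀ _ ht) h
    have hmj : m < (t + k - t₀).val := by
      by_contra hjm
      have hj := add_natCast_mem_of_le hT hTk ht₀ hkn (not_lt.1 hjm) hmk hm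
      rw [ZMod.natCast_zmod_val, add_sub_cancel] at hj
      exact hT _ ht _ hj (disjoint_window_add le_rfl (by omega) t)
    simp only [mem_window, val_sub_eq_ite, val_add_eq_ite, val_cast_of_lt (by omega : m < n),
      val_cast_of_lt (by omega : k < n)] at h h' hmj ⊢
    split_ifs at h h' hmj ⊢ <;> omega

section Arcs

variable {α : Type*} {σ : ZMod n ≃ α} {t : ZMod n}

def arc (k : ℕ) (σ : ZMod n ≃ α) (t : ZMod n) : Finset α := (window k t).map σ.toEmbedding

lemma mem_arc {a : α} : a ∈ arc k σ t ↔ σ.symm a ∈ window k t := mem_map_equiv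

lemma apply_mem_arc {s : ZMod n} : σ s ∈ arc k σ t ↔ s ∈ window k t := by
  simp [mem_arc]

lemma card_arc (hkn : k ≤ n) : #(arc k σ t) = k := by
  rw [arc, card_map, card_window hkn]

lemma arc_addLeft_trans (a : ZMod n) :
    arc k ((Equiv.addLeft a).trans σ) t = arc k σ (a + t) := by
  ext x
  simp only [mem_arc, Equiv.symm_trans_apply, Equiv.coe_addLeft, Equiv.addLeft_symm, mem_window]
  ring_nf

lemma arc_trans (π : Equiv.Perm α) : arc k (σ.trans π) t = (arc k σ t).map π.toEmbedding := by
  simp [arc, map_map]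

lemma arc_swap_trans_of_iff {p q : ZMod n} (h : p ∈ window k t ↔ q ∈ window k t) :
    arc k ((Equiv.swap p q).trans σ) t = arc k σ t := by
  ext x
  simp only [mem_arc, Equiv.symm_trans_apply, Equiv.symm_swap, Equiv.swap_apply_def]
  split_ifs <;> simp_all

lemma arc_swap_trans_of_mem_of_notMem [DecidableEq α] {p q : ZMod n} (hp : p ∈ window k t)
    (hq : q ∉ window k t) :
    arc k ((Equiv.swap p q).trans σ) t = insert (σ q) ((arc k σ t).erase (σ p)) := by
  have hpq : p ≠ q := fun h => hq (h ▸ hp)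
  ext x
  obtain ⟨y, rfl⟩ := σ.surjective x
  simp only [mem_arc, mem_insert, mem_erase, Equiv.symm_trans_apply, Equiv.symm_swap,
    Equiv.symm_apply_apply, σ.apply_eq_iff_eq, Equiv.swap_apply_def]
  split_ifs <;> subst_vars <;> simp_all

end Arcs

section ArcStarts

variable {α : Type*} [DecidableEq α] {F : Finset (Finset α)}

def arcStarts (F : Finset (Finset α)) (k : ℕ) (σ : ZMod n ≃ α) : Finset (ZMod n) :=
  {t | arc k σ t ∈ F}

lemma not_disjoint_window_of_mem_arcStarts (hF : (F : Set (Finset α)).Intersecting)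
    {σ : ZMod n ≃ α} {t t' : ZMod n} (ht : t ∈ arcStarts F k σ)
    (ht' : t' ∈ arcStarts F k σ) :
    ¬Disjoint (window k t) (window k t') := by
  simp only [arcStarts, mem_filter, mem_univ, true_and] at ht ht'
  simpa [arc] using hF ht ht'

lemma card_arcStarts_le (hF : (F : Set (Finset α)).Intersecting) (hkn : 2 * k ≤ n)
    (σ : ZMod n ≃ α) : #(arcStarts F k σ) ≤ k :=
  card_le_of_pairwise_not_disjoint
    (fun _ ht _ ht' => not_disjoint_window_of_mem_arcStarts hF ht ht') hkn

end ArcStarts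

section Counting

variable {α : Type*} [Fintype α] [DecidableEq α] {F : Finset (Finset α)}

lemma card_filter_arc_eq_congr {A B : Finset α} (hAB : #A = #B) (t t' : ZMod n) :
    #{σ : ZMod n ≃ α | arc k σ t = A} = #{σ : ZMod n ≃ α | arc k σ t' = B} := by
  obtain ⟨π, hπ⟩ := (Set.powersetCard.isPretransitive (α := α) (n := #A)).exists_smul_eq
    ⟨A, rfl⟩ ⟨B, hAB.symm⟩
  replace hπ : A.map π.toEmbedding = B := by
    simpa [Subtype.ext_iff, Set.powersetCard.coe_smul, smul_finset_def, map_eq_image] using hπ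
  refine card_equiv (Equiv.equivCongr (Equiv.addLeft (t - t')).symm π) fun σ => ?_
  simp only [mem_filter, mem_univ, true_and]
  change _ ↔ arc k (((Equiv.addLeft (t - t')).trans σ).trans π) t' = B
  rw [arc_trans, arc_addLeft_trans, sub_add_cancel, ← hπ, map_inj]

lemma card_filter_arc_mem (hFk : ∀ A ∈ F, #A = k) {A₀ : Finset α} (hA₀ : #A₀ = k)
    (t : ZMod n) :
    #{σ : ZMod n ≃ α | arc k σ t ∈ F} = #F * #{σ : ZMod n ≃ α | arc k σ 0 = A₀} := by
  rw [card_eq_sum_card_fiberwise (s := {σ | arc k σ t ∈ F}) (f := fun σ => arc k σ t) (t := F)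
    fun σ hσ => by simpa using hσ]
  refine sum_const_nat fun A hA => ?_
  rw [filter_filter, filter_congr fun σ _ => and_iff_right_of_imp fun h => h ▸ hA]
  exact card_filter_arc_eq_congr ((hFk A hA).trans hA₀.symm) t 0

lemma sum_card_arcStarts (hFk : ∀ A ∈ F, #A = k) {A₀ : Finset α} (hA₀ : #A₀ = k) :
    ∑ σ : ZMod n ≃ α, #(arcStarts F k σ) =
      n * (#F * #{σ : ZMod n ≃ α | arc k σ 0 = A₀}) := by
  calc ∑ σ : ZMod n ≃ α, #(arcStarts F k σ)
      = ∑ t : ZMod n, #{σ : ZMod n ≃ α | arc k σ t ∈ F} := by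
        simp only [arcStarts, card_filter]
        exact sum_comm
    _ = n * (#F * #{σ : ZMod n ≃ α | arc k σ 0 = A₀}) := by
        rw [sum_const_nat fun t _ => card_filter_arc_mem hFk hA₀ t, card_univ, ZMod.card]

lemma card_equiv_eq_choose_mul {A₀ : Finset α} (hA₀ : #A₀ = k) (σ : ZMod n ≃ α) :
    Fintype.card (ZMod n ≃ α) = n.choose k * #{σ : ZMod n ≃ α | arc k σ 0 = A₀} := by
  have hα : Fintype.card α = n := by rw [← Fintype.card_congr σ, ZMod.card]
  have hkn : k ≤ n := hα ▸ hA₀ ▸ card_le_univ A₀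
  rw [← card_univ, card_eq_sum_card_fiberwise (f := fun σ => arc k σ 0)
    (t := powersetCard k univ) fun σ _ => mem_powersetCard_univ.2 (card_arc hkn)]
  rw [sum_const_nat fun A hA => card_filter_arc_eq_congr
    ((mem_powersetCard_univ.1 hA).trans hA₀.symm) 0 0, card_powersetCard, card_univ, hα]

/-- Each arrangement has at most `k` arcs in `F`, and `n * C(n-1, k-1) = k * C(n, k)` makes the
average exactly `k`. -/
theorem card_arcStarts_eq (hk : 0 < k) (hkn : 2 * k ≤ n)
    (hF : (F : Set (Finset α)).Intersecting) (hFk : ∀ A ∈ F, #A = k)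
    (hFcard : #F = (n - 1).choose (k - 1)) (σ : ZMod n ≃ α) : #(arcStarts F k σ) = k := by
  have hA₀ : #(arc k σ 0) = k := card_arc (by omega)
  have hsum : ∑ τ : ZMod n ≃ α, #(arcStarts F k τ) = ∑ _τ : ZMod n ≃ α, k := by
    rw [sum_card_arcStarts hFk hA₀, sum_const, card_univ, card_equiv_eq_choose_mul hA₀ σ,
      hFcard, smul_eq_mul]
    have := Nat.add_one_mul_choose_eq (n - 1) (k - 1)
    rw [Nat.sub_add_cancel (by omega), Nat.sub_add_cancel hk] at this
    rw [← mul_assoc, this]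
    ring
  exact (sum_eq_sum_iff_of_le fun τ _ => card_arcStarts_le hF hkn τ).1 hsum σ (mem_univ σ)

end Counting

section Center

variable {α : Type*} {F : Finset (Finset α)} {σ : ZMod n ≃ α}

def IsCenter (F : Finset (Finset α)) (k : ℕ) (σ : ZMod n ≃ α) (c : ZMod n) : Prop :=
  ∀ t, arc k σ t ∈ F ↔ c ∈ window k t

lemma exists_isCenter [DecidableEq α] (hF : (F : Set (Finset α)).Intersecting) (hkn : 2 * k < n)
    (hσ : #(arcStarts F k σ) = k) : ∃ c, IsCenter F k σ c := by
  obtain ⟨c, hc⟩ := exists_forall_mem_iff_mem_window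
    (fun _ ht _ ht' => not_disjoint_window_of_mem_arcStarts hF ht ht') hkn hσ
  exact ⟨c, fun t => by simpa [arcStarts] using hc t⟩

lemma IsCenter.addLeft_trans {c : ZMod n} (hσ : IsCenter F k σ c) :
    IsCenter F k ((Equiv.addLeft c).trans σ) 0 := fun t => by
  rw [arc_addLeft_trans, hσ, mem_window, mem_window, sub_add_cancel_left, zero_sub]

lemma IsCenter.swap_trans (hcenter : ∀ τ : ZMod n ≃ α, ∃ c, IsCenter F k τ c)
    (hσ : IsCenter F k σ 0) {t₁ t₂ : ZMod n}
    (hpin : ∀ c, (c ∈ window k t₁ ↔ (0 : ZMod n) ∈ window k t₁) →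
      (c ∈ window k t₂ ↔ (0 : ZMod n) ∈ window k t₂) → c = 0)
    {p q : ZMod n} (h₁ : p ∈ window k t₁ ↔ q ∈ window k t₁)
    (h₂ : p ∈ window k t₂ ↔ q ∈ window k t₂) :
    IsCenter F k ((Equiv.swap p q).trans σ) 0 := by
  obtain ⟨c, hc⟩ := hcenter ((Equiv.swap p q).trans σ)
  have key : ∀ t, (p ∈ window k t ↔ q ∈ window k t) →
      (c ∈ window k t ↔ (0 : ZMod n) ∈ window k t) := by
    intro t ht
    rw [← hc, arc_swap_trans_of_iff ht, hσ]
  rwa [← hpin c (key t₁ h₁) (key t₂ h₂)]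

section Exchange

variable (hk : 0 < k) (hkn : 2 * k < n) (hcenter : ∀ τ : ZMod n ≃ α, ∃ c, IsCenter F k τ c)
include hk hkn hcenter

lemma IsCenter.swap_trans_of_mem_window_zero (hσ : IsCenter F k σ 0) {p q : ZMod n}
    (hp : p ∈ window k 0) (hp0 : p ≠ 0) (hq : q ∉ window k 0)
    (hq' : q ∉ window k (-(k : ZMod n))) :
    IsCenter F k ((Equiv.swap p q).trans σ) 0 := by
  have hk' : k < n := by omega
  rw [← ZMod.val_ne_zero] at hp0
  simp only [mem_window_zero, mem_window_neg hk'] at hp hq hq'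
  refine hσ.swap_trans hcenter (fun _ => eq_zero_of_iff_window_one_sub_neg hk hk') ?_ ?_
  · simp only [mem_window_one_sub hk hk']
    omega
  · simp only [mem_window_neg hk']
    omega

/-- An element sitting in `[-k, -1]` cannot be swapped straight to position `k`: it goes to `-k`
first (the windows at `0` and `1` are untouched), then to `k` (the windows at `1 - k` and `0`
are untouched). -/
lemma IsCenter.exists_reposition (hσ : IsCenter F k σ 0) {q : ZMod n}
    (hq : q ∈ window k (-(k : ZMod n))) :
    ∃ σ' : ZMod n ≃ α, σ' 0 = σ 0 ∧ IsCenter F k σ' 0 ∧ arc k σ' 0 = arc k σ 0 ∧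
      σ' k = σ q := by
  have hk' : k < n := by omega
  rw [mem_window_neg hk'] at hq
  have hq0 : q ≠ 0 := by
    rw [Ne, ← ZMod.val_eq_zero]
    omega
  have hneg0 : -(k : ZMod n) ≠ 0 := by
    rw [Ne, ← ZMod.val_eq_zero, val_neg_natCast hk hk']
    omega
  have hk0 : (k : ZMod n) ≠ 0 := by
    rw [Ne, ← ZMod.val_eq_zero, val_cast_of_lt hk']
    omega
  set σ₁ := (Equiv.swap q (-(k : ZMod n))).trans σ
  have hσ₁ : IsCenter F k σ₁ 0 := by
    refine hσ.swap_trans hcenter (fun _ => eq_zero_of_iff_window_zero_one hk hk') ?_ ?_ <;>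
      simp only [mem_window_zero, mem_window_one hk hk', val_neg_natCast hk hk'] <;> omega
  refine ⟨(Equiv.swap (-(k : ZMod n)) k).trans σ₁, ?_, ?_, ?_, by simp [σ₁]⟩
  · simp [σ₁, Equiv.swap_apply_of_ne_of_ne hneg0.symm hk0.symm,
      Equiv.swap_apply_of_ne_of_ne hq0.symm hneg0.symm]
  · refine hσ₁.swap_trans hcenter (fun _ => eq_zero_of_iff_window_one_sub_zero hk hkn) ?_ ?_ <;>
      simp only [mem_window_zero, mem_window_one_sub hk hk', val_neg_natCast hk hk',
        val_cast_of_lt hk'] <;> omega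
  · rw [arc_swap_trans_of_iff, arc_swap_trans_of_iff] <;>
      simp only [mem_window_zero, val_neg_natCast hk hk', val_cast_of_lt hk'] <;> omega

lemma IsCenter.exists_exchange [DecidableEq α] (hσ : IsCenter F k σ 0) {b y : α}
    (hb : b ∈ arc k σ 0) (hb0 : b ≠ σ 0) (hy : y ∉ arc k σ 0) :
    ∃ τ : ZMod n ≃ α, τ 0 = σ 0 ∧ IsCenter F k τ 0 ∧
      arc k τ 0 = insert y ((arc k σ 0).erase b) := by
  have hk' : k < n := by omega
  obtain ⟨σ', h0, hσ', harc, hy'⟩ : ∃ σ' : ZMod n ≃ α,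
      σ' 0 = σ 0 ∧ IsCenter F k σ' 0 ∧ arc k σ' 0 = arc k σ 0 ∧
        σ'.symm y ∉ window k (-(k : ZMod n)) := by
    by_cases hq : σ.symm y ∈ window k (-(k : ZMod n))
    · obtain ⟨σ', h0, hσ', harc, hσ'k⟩ := hσ.exists_reposition hk hkn hcenter hq
      refine ⟨σ', h0, hσ', harc, ?_⟩
      rw [Equiv.apply_symm_apply] at hσ'k
      rw [← hσ'k, Equiv.symm_apply_apply, mem_window_neg hk', val_cast_of_lt hk']
      omega
    · exact ⟨σ, rfl, hσ, rfl, hq⟩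
  rw [← harc] at hb hy ⊢
  rw [← h0] at hb0 ⊢
  have hp : σ'.symm b ∈ window k 0 := mem_arc.1 hb
  have hq : σ'.symm y ∉ window k 0 := fun h => hy (mem_arc.2 h)
  have hp0 : σ'.symm b ≠ 0 := fun h => hb0 (by rw [← h, Equiv.apply_symm_apply])
  have hq0 : σ'.symm y ≠ 0 := fun h => hq (h ▸ by simpa [mem_window_zero] using hk)
  refine ⟨(Equiv.swap (σ'.symm b) (σ'.symm y)).trans σ', ?_,
    hσ'.swap_trans_of_mem_window_zero hk hkn hcenter hp hp0 hq hy', ?_⟩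
  · simp [Equiv.swap_apply_of_ne_of_ne hp0.symm hq0.symm]
  · rw [arc_swap_trans_of_mem_of_notMem hp hq, Equiv.apply_symm_apply, Equiv.apply_symm_apply]

lemma IsCenter.mem [DecidableEq α] (hσ : IsCenter F k σ 0) {S : Finset α} (hS : #S = k)
    (h0 : σ 0 ∈ S) : S ∈ F := by
  obtain ⟨d, hd⟩ : ∃ d, #(S \ arc k σ 0) = d := ⟨_, rfl⟩
  induction d generalizing σ with
  | zero =>
    have hsub : S ⊆ arc k σ 0 := sdiff_eq_empty_iff_subset.1 (card_eq_zero.1 hd)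
    rw [eq_of_subset_of_card_le hsub (by rw [card_arc (by omega), hS]), hσ 0, mem_window_zero,
      ZMod.val_zero]
    exact hk
  | succ d ih =>
    have hBS : #(arc k σ 0) = #S := (card_arc (by omega)).trans hS.symm
    obtain ⟨y, hy⟩ : (S \ arc k σ 0).Nonempty := card_pos.1 (by omega)
    obtain ⟨b, hb⟩ : (arc k σ 0 \ S).Nonempty :=
      card_pos.1 (by rw [card_sdiff_comm hBS]; omega)
    rw [mem_sdiff] at hy hb
    obtain ⟨τ, hτ0, hτ, harc⟩ :=
      hσ.exists_exchange hk hkn hcenter hb.1 (fun h => hb.2 (h ▸ h0)) hy.2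
    rw [← hτ0] at h0
    refine ih hτ h0 ?_
    have hb' : S \ (arc k σ 0).erase b = S \ arc k σ 0 := by
      ext a
      simp only [mem_sdiff, mem_erase]
      grind
    rw [harc, sdiff_insert, hb', card_erase_of_mem (mem_sdiff.2 hy), hd, Nat.add_sub_cancel]

end Exchange

end Center

lemma mem_of_forall_card_eq_mem {α : Type*} [Fintype α] [DecidableEq α]
    {F : Finset (Finset α)} (hk : 0 < k) (hkα : 2 * k ≤ Fintype.card α)
    (hF : (F : Set (Finset α)).Intersecting) {x : α}
    (hstar : ∀ S : Finset α, #S = k → x ∈ S → S ∈ F) {S : Finset α} (hS : S ∈ F)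
    (hSk : #S = k) : x ∈ S := by
  by_contra hx
  obtain ⟨T, hxT, hTS, hTk⟩ := exists_subsuperset_card_eq (n := k)
    (singleton_subset_iff.2 (mem_compl.2 hx)) (by rw [card_singleton]; omega)
    (by rw [card_compl]; omega)
  exact hF hS (hstar T hTk (singleton_subset_iff.1 hxT))
    (disjoint_of_subset_right hTS disjoint_compl_right)

end Katona

open Katona

theorem ekr_uniqueness (n k : ℕ) (hk : 0 < k) (hn : 2 * k < n)
    (F : Finset (Finset (Fin n)))
    (hcard : ∀ S ∈ F, S.card = k)
    (hint : ∀ S ∈ F, ∀ T ∈ F, (S ∩ T).Nonempty)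
    (hmax : F.card = (n - 1).choose (k - 1)) :
    ∃ i : Fin n, F = Finset.univ.filter (fun S : Finset (Fin n) => S.card = k ∧ i ∈ S) := by
  have : NeZero n := ⟨by omega⟩
  have hF : (F : Set (Finset (Fin n))).Intersecting := by
    intro S hS T hT
    exact not_disjoint_iff_nonempty_inter.2 (hint S hS T hT)
  have hcenter (τ : ZMod n ≃ Fin n) : ∃ c, IsCenter F k τ c :=
    exists_isCenter hF hn (card_arcStarts_eq hk hn.le hF hcard hmax τ)
  obtain ⟨c, hc⟩ := hcenter (ZMod.finEquiv n).symm.toEquiv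
  set σ := (Equiv.addLeft c).trans (ZMod.finEquiv n).symm.toEquiv
  have hstar (S : Finset (Fin n)) (hSk : #S = k) (hx : σ 0 ∈ S) : S ∈ F :=
    hc.addLeft_trans.mem hk hn hcenter hSk hx
  refine ⟨σ 0, ext fun S => ?_⟩
  rw [mem_filter, and_iff_right (mem_univ S)]
  have h2k : 2 * k ≤ Fintype.card (Fin n) := by
    rw [Fintype.card_fin]
    omega
  exact ⟨fun hS => ⟨hcard S hS, mem_of_forall_card_eq_mem hk h2k hF hstar hS (hcard S hS)⟩,
    fun ⟨hSk, hx⟩ => hstar S hSk hx⟩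
end

section
/- Let G be a k-regular graph on N vertices with adjacency matrix A and least eigenvalue λ_min. If S is an independent set with |S| = N·(-λ_min)/(k - λ_min), then the characteristic vector of S lies in the sum of the eigenspace of A for eigenvalue k and the eigenspace for eigenvalue λ_min. -/
/-!
Put `c = |S| / N` and `x = 1_S - c • 1`. Since `1` is a `k`-eigenvector of the symmetric matrix `A`
and `S` is independent, the Rayleigh quotient of `x` is `-k |S| / (N - |S|)`, and the assumed value
of `|S|` makes it equal to `λ_min`. A vector attaining the least eigenvalue as its Rayleigh quotient
lies in the kernel of the positive semidefinite matrix `A - λ_min • 1`, so `x` is a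
`λ_min`-eigenvector and `1_S = c • 1 + x`.
-/

open Matrix Module.End

namespace Matrix

variable {n : Type*} [Fintype n]

theorem IsHermitian.posSemidef_sub_smul_one [DecidableEq n] {A : Matrix n n ℝ}
    (hA : A.IsHermitian) {m : ℝ} (hm : ∀ μ, HasEigenvalue (toLin' A) μ → m ≤ μ) :
    (A - m • 1).PosSemidef := by
  have hB : (A - m • 1).IsHermitian := hA.sub (isHermitian_one.smul (IsSelfAdjoint.all m))
  rw [hB.posSemidef_iff_eigenvalues_nonneg]
  intro i
  have hi := hB.eigenvalues_mem_spectrum_real i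
  rw [← spectrum_toLin', ← hasEigenvalue_iff_mem_spectrum, map_sub, map_smul, toLin'_one,
    hasEigenvalue_sub_iff] at hi
  simpa using hm _ hi

theorem IsHermitian.mulVec_eq_smul_of_dotProduct_mulVec_eq [DecidableEq n] {A : Matrix n n ℝ}
    (hA : A.IsHermitian) {m : ℝ} (hm : ∀ μ, HasEigenvalue (toLin' A) μ → m ≤ μ) {x : n → ℝ}
    (hx : x ⬝ᵥ A *ᵥ x = m * (x ⬝ᵥ x)) : A *ᵥ x = m • x := by
  have h := ((hA.posSemidef_sub_smul_one hm).dotProduct_mulVec_zero_iff x).mp (by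
    simp [sub_mulVec, hx, smul_mulVec])
  rwa [sub_mulVec, smul_mulVec, one_mulVec, sub_eq_zero] at h

theorem dotProduct_mulVec_sub_smul_of_mulVec_eq {A : Matrix n n ℝ} (hA : A.IsSymm) {o : n → ℝ}
    {k : ℝ} (ho : A *ᵥ o = k • o) (f : n → ℝ) (c : ℝ) :
    (f - c • o) ⬝ᵥ A *ᵥ (f - c • o) =
      f ⬝ᵥ A *ᵥ f - 2 * c * k * (f ⬝ᵥ o) + c ^ 2 * k * (o ⬝ᵥ o) := by
  have hoA : o ⬝ᵥ A *ᵥ f = k * (f ⬝ᵥ o) := by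
    rw [dotProduct_mulVec, ← hA.eq, vecMul_transpose, ho, smul_dotProduct, smul_eq_mul,
      dotProduct_comm]
  simp only [mulVec_sub, mulVec_smul, ho, sub_dotProduct, dotProduct_sub, smul_dotProduct,
    dotProduct_smul, hoA, smul_eq_mul]
  ring

theorem sub_smul_dotProduct_sub_smul (f o : n → ℝ) (c : ℝ) :
    (f - c • o) ⬝ᵥ (f - c • o) = f ⬝ᵥ f - 2 * c * (f ⬝ᵥ o) + c ^ 2 * (o ⬝ᵥ o) := by
  simp only [sub_dotProduct, dotProduct_sub, smul_dotProduct, dotProduct_smul, smul_eq_mul,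
    dotProduct_comm o f]
  ring

end Matrix

def charVec {V : Type*} [DecidableEq V] (S : Finset V) : V → ℝ := fun v => if v ∈ S then 1 else 0

theorem charVec_empty {V : Type*} [DecidableEq V] : charVec (∅ : Finset V) = 0 := by
  ext
  simp [charVec]

section charVec

variable {V : Type*} [Fintype V] [DecidableEq V] (S : Finset V)

theorem charVec_dotProduct (g : V → ℝ) : charVec S ⬝ᵥ g = ∑ v ∈ S, g v := by
  simp [charVec, dotProduct, Finset.sum_ite_mem]

theorem charVec_dotProduct_self : charVec S ⬝ᵥ charVec S = S.card := by
  rw [charVec_dotProduct]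
  simp +contextual [charVec]

theorem charVec_dotProduct_one : charVec S ⬝ᵥ 1 = S.card := by
  simp [charVec_dotProduct]

theorem SimpleGraph.charVec_dotProduct_adjMatrix_mulVec_charVec (G : SimpleGraph V)
    [DecidableRel G.Adj] (hS : ∀ v ∈ S, ∀ w ∈ S, ¬G.Adj v w) :
    charVec S ⬝ᵥ G.adjMatrix ℝ *ᵥ charVec S = 0 := by
  rw [charVec_dotProduct]
  refine Finset.sum_eq_zero fun v hv => ?_
  simp only [adjMatrix_mulVec_apply, charVec]
  exact Finset.sum_eq_zero fun w hw =>
    if_neg fun hwS => hS v hv w hwS ((G.mem_neighborFinset v w).1 hw)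

end charVec

theorem ratio_bound_equality_general (V : Type*) [Fintype V] [DecidableEq V]
    (G : SimpleGraph V) [DecidableRel G.Adj] (k : ℕ)
    (hreg : G.IsRegularOfDegree k)
    (lmin : ℝ)
    (hleast : ∀ μ : ℝ, Module.End.HasEigenvalue (Matrix.toLin' (G.adjMatrix ℝ)) μ → lmin ≤ μ)
    (S : Finset V) (hS : ∀ v ∈ S, ∀ w ∈ S, ¬ G.Adj v w)
    (heq : (S.card : ℝ) = (Fintype.card V : ℝ) * (-lmin) / ((k : ℝ) - lmin)) :
    (fun v => if v ∈ S then (1 : ℝ) else 0) ∈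
      Module.End.eigenspace (Matrix.toLin' (G.adjMatrix ℝ)) (k : ℝ) ⊔
        Module.End.eigenspace (Matrix.toLin' (G.adjMatrix ℝ)) lmin := by
  change charVec S ∈ _
  rcases isEmpty_or_nonempty V with hV | hV
  · exact Subsingleton.elim (charVec S) 0 ▸ zero_mem _
  rcases eq_or_ne (k : ℝ) lmin with hk | hk
  · rw [hk, sub_self, div_zero, Nat.cast_eq_zero, Finset.card_eq_zero] at heq
    rw [heq, charVec_empty]
    exact zero_mem _
  have hN : (Fintype.card V : ℝ) ≠ 0 := by positivity
  have hone : G.adjMatrix ℝ *ᵥ 1 = (k : ℝ) • 1 := by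
    ext v
    simp [hreg v]
  set c : ℝ := S.card / Fintype.card V
  have hrayleigh : (charVec S - c • 1) ⬝ᵥ G.adjMatrix ℝ *ᵥ (charVec S - c • 1) =
      lmin * ((charVec S - c • 1) ⬝ᵥ (charVec S - c • 1)) := by
    rw [dotProduct_mulVec_sub_smul_of_mulVec_eq G.isSymm_adjMatrix hone,
      sub_smul_dotProduct_sub_smul, G.charVec_dotProduct_adjMatrix_mulVec_charVec S hS,
      charVec_dotProduct_self, charVec_dotProduct_one, one_dotProduct_one]
    simp only [c, heq]
    have : (k : ℝ) - lmin ≠ 0 := sub_ne_zero.2 hk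
    field_simp
    ring
  have heigen := (G.isHermitian_adjMatrix ℝ).mulVec_eq_smul_of_dotProduct_mulVec_eq hleast hrayleigh
  rw [← add_sub_cancel (c • 1) (charVec S)]
  exact Submodule.add_mem_sup (Submodule.smul_mem _ c (mem_eigenspace_iff.2 hone))
    (mem_eigenspace_iff.2 heigen)

theorem ratio_bound_equality (V : Type*) [Fintype V] [DecidableEq V]
    (G : SimpleGraph V) [DecidableRel G.Adj] (k : ℕ)
    (hconn : G.Connected)
    (hreg : G.IsRegularOfDegree k)
    (lmin : ℝ)
    (hmin : Module.End.HasEigenvalue (Matrix.toLin' (G.adjMatrix ℝ)) lmin)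
    (hleast : ∀ μ : ℝ, Module.End.HasEigenvalue (Matrix.toLin' (G.adjMatrix ℝ)) μ → lmin ≤ μ)
    (S : Finset V) (hS : ∀ v ∈ S, ∀ w ∈ S, ¬ G.Adj v w)
    (heq : (S.card : ℝ) = (Fintype.card V : ℝ) * (-lmin) / ((k : ℝ) - lmin)) :
    (fun v => if v ∈ S then (1 : ℝ) else 0) ∈
      Module.End.eigenspace (Matrix.toLin' (G.adjMatrix ℝ)) (k : ℝ) ⊔
        Module.End.eigenspace (Matrix.toLin' (G.adjMatrix ℝ)) lmin :=
  ratio_bound_equality_general V G k hreg lmin hleast S hS heq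
end

section
/- For all integers n, k, q with q ≥ 2 and 2 ≤ k < n/2, the inequality q^{k(k-1)} · [n-k-1 choose k-1]_q > q^{n-1-k} · [n-2 choose k-2]_q holds, where [a choose b]_q denotes the Gaussian binomial coefficient. -/
/-- The Gaussian binomial coefficient `[a choose b]_q`, defined via the
`q`-Pascal recurrence `[a+1, b+1]_q = [a, b]_q + q^(b+1) * [a, b+1]_q`. -/
def gaussBinom (q : ℕ) : ℕ → ℕ → ℕ
  | _, 0 => 1
  | 0, _ + 1 => 0
  | a + 1, b + 1 => gaussBinom q a b + q ^ (b + 1) * gaussBinom q a (b + 1)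

/-!
With `x = q⁻¹`, the `q`-Pascal recurrence gives
`[m + b, b]_q * ∏_{i<b} (1 - x^(i+1)) = q^(b m) * ∏_{i<b} (1 - x^(m+i+1))`.
After clearing the denominator `∏_{i<k-1} (1 - x^(i+1))`, the powers of `q` on the two sides
differ by exactly one factor `q` in favour of the left, so it remains to compare products of
factors `1 - x^e`. The one on the right is `< 1`, as it contains `1 - x^(k-1)`; the one on the
left is `≥ 1 - x`, hence `≥ q⁻¹`, by the inductive bound
`1 - x^m + x^(m+b) ≤ ∏_{i<b} (1 - x^(m+i+1))`, valid for `0 ≤ x ≤ 1/2`.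
-/

open Finset

theorem gaussBinom_zero_right (q a : ℕ) : gaussBinom q a 0 = 1 := by
  cases a <;> rfl

theorem gaussBinom_eq_zero_of_lt (q : ℕ) : ∀ {a b : ℕ}, a < b → gaussBinom q a b = 0
  | 0, _ + 1, _ => rfl
  | a + 1, b + 1, h => by
    rw [gaussBinom, gaussBinom_eq_zero_of_lt q (by omega : a < b),
      gaussBinom_eq_zero_of_lt q (by omega : a < b + 1), mul_zero, add_zero]

theorem gaussBinom_mul_prod_one_sub {K : Type*} [Field K] (q : ℕ) (hq : (q : K) ≠ 0) (b m : ℕ) :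
    (gaussBinom q (m + b) b : K) * ∏ i ∈ range b, (1 - (q : K)⁻¹ ^ (i + 1)) =
      (q : K) ^ (b * m) * ∏ i ∈ range b, (1 - (q : K)⁻¹ ^ (m + i + 1)) := by
  induction b generalizing m with
  | zero => simp [gaussBinom_zero_right]
  | succ b ihb =>
    induction m with
    | zero =>
      have hbb := ihb 0
      simp only [zero_add, mul_zero, pow_zero, one_mul] at hbb ⊢
      rw [gaussBinom, gaussBinom_eq_zero_of_lt q (Nat.lt_succ_self b), prod_range_succ]
      push_cast
      linear_combination (1 - (q : K)⁻¹ ^ (b + 1)) * hbb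
    | succ m ihm =>
      have hstep := ihb (m + 1)
      rw [show m + 1 + (b + 1) = m + 1 + b + 1 by ring, gaussBinom]
      rw [show m + 1 + b = m + (b + 1) by ring] at hstep ⊢
      rw [prod_range_succ, prod_range_succ' (fun i => 1 - (q : K)⁻¹ ^ (m + i + 1))] at ihm
      simp only [show ∀ i, m + (i + 1) + 1 = m + 1 + i + 1 by omega, add_zero] at ihm
      have hinv : (q : K) ^ (m + 1) * (q : K)⁻¹ ^ (m + 1) = 1 := by
        rw [← mul_pow, mul_inv_cancel₀ hq, one_pow]
      push_cast
      rw [prod_range_succ, prod_range_succ]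
      linear_combination (1 - (q : K)⁻¹ ^ (b + 1)) * hstep + (q : K) ^ (b + 1) * ihm -
        (q : K) ^ (b * (m + 1)) * (∏ i ∈ range b, (1 - (q : K)⁻¹ ^ (m + 1 + i + 1))) *
          (1 - (q : K)⁻¹ ^ (b + 1)) * hinv

section OrderedField

variable {K : Type*} [Field K] [LinearOrder K] [IsStrictOrderedRing K]

theorem one_sub_pow_add_pow_le_prod_one_sub_pow {x : K} (hx0 : 0 ≤ x) (hx : 2 * x ≤ 1)
    (m b : ℕ) : 1 - x ^ m + x ^ (m + b) ≤ ∏ i ∈ range b, (1 - x ^ (m + i + 1)) := by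
  induction b with
  | zero => simp
  | succ b ih =>
    have hx1 : x ≤ 1 := by linarith
    have hY : 0 ≤ x ^ (m + b) := pow_nonneg hx0 _
    have hXY : x ^ (m + b) ≤ x ^ m := pow_le_pow_of_le_one hx0 hx1 (by omega)
    have hfactor : 0 ≤ 1 - x ^ (m + b + 1) := sub_nonneg.2 (pow_le_one₀ hx0 hx1)
    rw [prod_range_succ]
    calc 1 - x ^ m + x ^ (m + (b + 1))
        ≤ (1 - x ^ m + x ^ (m + b)) * (1 - x ^ (m + b + 1)) := by
          have hgap : (1 - x ^ m + x ^ (m + b)) * (1 - x ^ (m + b + 1)) -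
              (1 - x ^ m + x ^ (m + (b + 1))) =
                x ^ (m + b) * ((1 - 2 * x) + x * (x ^ m - x ^ (m + b))) := by ring
          nlinarith [mul_nonneg hY (sub_nonneg.2 hx),
            mul_nonneg (mul_nonneg hY hx0) (sub_nonneg.2 hXY)]
      _ ≤ _ := mul_le_mul_of_nonneg_right ih hfactor

theorem prod_one_sub_pow_mem_Icc {x : K} (hx0 : 0 ≤ x) (hx1 : x ≤ 1) (m b : ℕ) :
    ∏ i ∈ range b, (1 - x ^ (m + i + 1)) ∈ Set.Icc 0 1 := by
  have hfactor : ∀ i ∈ range b, 1 - x ^ (m + i + 1) ∈ Set.Icc 0 1 := fun i _ =>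
    ⟨sub_nonneg.2 (pow_le_one₀ hx0 hx1), sub_le_self _ (pow_nonneg hx0 _)⟩
  exact ⟨prod_nonneg fun i hi => (hfactor i hi).1, prod_le_one (fun i hi => (hfactor i hi).1)
    fun i hi => (hfactor i hi).2⟩

theorem one_sub_inv_pow_mul_prod_lt {q : K} (hq : 2 ≤ q) (c m : ℕ) :
    (1 - q⁻¹ ^ (c + 1)) * ∏ i ∈ range c, (1 - q⁻¹ ^ (m + c + 3 + i + 1)) <
      q * ∏ i ∈ range (c + 1), (1 - q⁻¹ ^ (m + 1 + i + 1)) := by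
  have hx0 : 0 < q⁻¹ := by positivity
  have hx : 2 * q⁻¹ ≤ 1 := by
    rw [← div_eq_mul_inv, div_le_one (by linarith)]; exact hq
  have hx1 : q⁻¹ ≤ 1 := by linarith
  have hlhs : (1 - q⁻¹ ^ (c + 1)) * ∏ i ∈ range c, (1 - q⁻¹ ^ (m + c + 3 + i + 1)) < 1 := by
    obtain ⟨-, hA1⟩ := prod_one_sub_pow_mem_Icc hx0.le hx1 (m + c + 3) c
    have hpow : 0 < q⁻¹ ^ (c + 1) := pow_pos hx0 _
    have hfactor : 0 ≤ 1 - q⁻¹ ^ (c + 1) := sub_nonneg.2 (pow_le_one₀ hx0.le hx1)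
    calc _ ≤ 1 - q⁻¹ ^ (c + 1) := mul_le_of_le_one_right hfactor hA1
      _ < 1 := by linarith
  have hrhs : 1 ≤ q * ∏ i ∈ range (c + 1), (1 - q⁻¹ ^ (m + 1 + i + 1)) := by
    have hA := one_sub_pow_add_pow_le_prod_one_sub_pow hx0.le hx (m + 1) (c + 1)
    have hpow : q⁻¹ ^ (m + 1) ≤ q⁻¹ := pow_le_of_le_one hx0.le hx1 (by omega)
    have hq1 : q * (1 - q⁻¹) = q - 1 := by field_simp
    nlinarith [pow_nonneg hx0.le (m + 1 + (c + 1))]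
  linarith

end OrderedField

theorem pow_mul_gaussBinom_lt (q : ℕ) (hq : 2 ≤ q) (c m : ℕ) :
    q ^ (m + c + 2) * gaussBinom q (m + c + 3 + c) c <
      q ^ ((c + 2) * (c + 1)) * gaussBinom q (m + 1 + (c + 1)) (c + 1) := by
  have hQ : (2 : ℚ) ≤ q := by exact_mod_cast hq
  have hQ0 : (q : ℚ) ≠ 0 := by positivity
  have hsmall := gaussBinom_mul_prod_one_sub q hQ0 c (m + c + 3)
  have hlarge := gaussBinom_mul_prod_one_sub q hQ0 (c + 1) (m + 1)
  set x : ℚ := (q : ℚ)⁻¹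
  have hN : 0 < ∏ i ∈ range (c + 1), (1 - x ^ (i + 1)) :=
    prod_pos fun i _ => sub_pos.2 (pow_lt_one₀ (by positivity)
      (inv_lt_one_of_one_lt₀ (by linarith)) (by omega))
  rw [← Nat.cast_lt (α := ℚ), ← mul_lt_mul_iff_of_pos_right hN]
  push_cast at hsmall hlarge ⊢
  calc (q : ℚ) ^ (m + c + 2) * (gaussBinom q (m + c + 3 + c) c : ℚ) *
        ∏ i ∈ range (c + 1), (1 - x ^ (i + 1))
      = (q : ℚ) ^ (m + c + 2 + c * (m + c + 3)) *
          ((1 - x ^ (c + 1)) * ∏ i ∈ range c, (1 - x ^ (m + c + 3 + i + 1))) := by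
        rw [prod_range_succ, pow_add]
        linear_combination (q : ℚ) ^ (m + c + 2) * (1 - x ^ (c + 1)) * hsmall
    _ < (q : ℚ) ^ (m + c + 2 + c * (m + c + 3)) *
          (q * ∏ i ∈ range (c + 1), (1 - x ^ (m + 1 + i + 1))) :=
        mul_lt_mul_of_pos_left (one_sub_inv_pow_mul_prod_lt hQ c m) (by positivity)
    _ = _ := by
        linear_combination -(q : ℚ) ^ ((c + 2) * (c + 1)) * hlarge

theorem gauss_binom_ineq (n k q : ℕ) (hq : 2 ≤ q) (hk : 2 ≤ k) (hn : 2 * k < n) :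
    q ^ (k * (k - 1)) * gaussBinom q (n - k - 1) (k - 1) >
      q ^ (n - 1 - k) * gaussBinom q (n - 2) (k - 2) := by
  obtain ⟨c, rfl⟩ : ∃ c, k = c + 2 := ⟨k - 2, by omega⟩
  obtain ⟨m, rfl⟩ : ∃ m, n = m + 2 * c + 5 := ⟨n - (2 * c + 5), by omega⟩
  have hlarge : m + 2 * c + 5 - (c + 2) - 1 = m + 1 + (c + 1) := by omega
  have hsmall : m + 2 * c + 5 - 2 = m + c + 3 + c := by omega
  have hexp : m + 2 * c + 5 - 1 - (c + 2) = m + c + 2 := by omega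
  rw [show c + 2 - 1 = c + 1 by omega, show c + 2 - 2 = c by omega, hlarge, hsmall, hexp]
  exact pow_mul_gaussBinom_lt q hq c m
end

section
/- Let q ≥ 3 and n ≥ 1. If F ⊆ [q]^n is a family of words such that any two words in F agree in at least one coordinate, then |F| ≤ q^{n-1}. -/
set_option linter.unnecessarySimpa false


theorem ekr_words_bound (n q : ℕ) (hq : 3 ≤ q) (hn : 1 ≤ n)
    (F : Finset (Fin n → Fin q))
    (hint : ∀ w ∈ F, ∀ w' ∈ F, ∃ i : Fin n, w i = w' i) :
    F.card ≤ q ^ (n - 1) := by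
  haveI : NeZero q := ⟨by omega⟩
  set i0 : Fin n := ⟨0, hn⟩ with hi0
  set G : (Fin n → Fin q) → ({j : Fin n // j ≠ i0} → Fin q) :=
    fun w j => w j.1 - w i0 with hG
  have hinj : Set.InjOn G F := by
    intro w hw w' hw' h
    obtain ⟨i, hi⟩ := hint w hw w' hw'
    have h0 : w i0 = w' i0 := by
      by_cases hii : i = i0
      · rwa [hii] at hi
      · have := congrFun h ⟨i, hii⟩
        simp only [hG, hi, sub_right_inj] at this
        exact this
    funext j
    by_cases hj : j = i0
    · rw [hj]; exact h0
    · have := congrFun h ⟨j, hj⟩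
      simp only [hG, h0, sub_left_inj] at this
      exact this
  have hcard : F.card ≤ Fintype.card ({j : Fin n // j ≠ i0} → Fin q) := by
    rw [← Finset.card_univ]
    exact Finset.card_le_card_of_injOn G (fun x _ => Finset.mem_univ _) hinj
  calc F.card ≤ Fintype.card ({j : Fin n // j ≠ i0} → Fin q) := hcard
    _ = q ^ (n - 1) := by
        rw [Fintype.card_fun, Fintype.card_fin]
        congr 1
        have : Fintype.card {j : Fin n // j ≠ i0} =
            Fintype.card (Fin n) - Fintype.card {j : Fin n // j = i0} := by
          simpa using (Fintype.card_subtype_compl (fun j : Fin n => j = i0))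
        rw [this, Fintype.card_subtype_eq, Fintype.card_fin]
end

section
/- Let q ≥ 3 and n ≥ 1. If F ⊆ [q]^n is an intersecting family of words with |F| = q^{n-1}, then there exist i ∈ [n] and j ∈ [q] such that F = {w ∈ [q]^n : w(i) = j}. -/
/-!
Give `Fin q` the group structure of `ℤ/q`. If `w + (e, …, e) = w' + (e', …, e')` for intersecting
`w, w'`, then `e = e'` and `w = w'`; so an intersecting family of size `q^(n-1)` meets every coset
of the diagonal. Induct on `n`: for each offset `t`, the words of `F` with `w last - w 0 = t`, with
their last letter dropped, form such a family of shorter words, hence a star. Since `q ≥ 3` leaves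
room to build words that agree nowhere, two of these stars only fit together in an intersecting
family if they are equal, or if both fix coordinate `0` in the way that makes `w last` constant.
-/

open Function

namespace Words

variable {ι α : Type*}

def IsIntersecting (F : Set (ι → α)) : Prop :=
  ∀ w ∈ F, ∀ w' ∈ F, ∃ i, w i = w' i

def MeetsDiagonalCosets [Add α] (F : Set (ι → α)) : Prop :=
  ∀ u : ι → α, ∃ e, u + const ι e ∈ F

section

variable [AddCommGroup α]

theorem meetsDiagonalCosets_of_card_le [Finite ι] [Finite α] {F : Set (ι → α)}
    (hF : IsIntersecting F) (hcard : Nat.card (ι → α) ≤ Nat.card F * Nat.card α) :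
    MeetsDiagonalCosets F := by
  have hinj : Injective fun p : F × α => (p.1 : ι → α) + const ι p.2 := by
    rintro ⟨⟨w, hw⟩, e⟩ ⟨⟨w', hw'⟩, e'⟩ h
    obtain ⟨k, hk⟩ := hF w hw w' hw'
    have he : e = e' := by simpa [hk] using congrFun h k
    subst he
    simpa using h
  intro u
  obtain ⟨⟨⟨w, hw⟩, e⟩, hwe⟩ := (hinj.bijective_of_nat_card_le (by simpa using hcard)).2 u
  have hu : u + const ι (-e) = w := by ext; simp [← hwe]
  exact ⟨-e, hu ▸ hw⟩

variable {n : ℕ}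

def appendOffset (t : α) (v : Fin (n + 1) → α) : Fin (n + 2) → α :=
  Fin.snoc v (v 0 + t)

def offsetSlice (F : Set (Fin (n + 2) → α)) (t : α) : Set (Fin (n + 1) → α) :=
  {v | appendOffset t v ∈ F}

theorem exists_appendOffset_eq_iff {t s : α} {v w : Fin (n + 1) → α} :
    (∃ k, appendOffset t v k = appendOffset s w k) ↔ (∃ k, v k = w k) ∨ v 0 + t = w 0 + s := by
  simp [appendOffset, Fin.exists_fin_succ']

theorem appendOffset_add_const (t e : α) (v : Fin (n + 1) → α) :
    appendOffset t v + const _ e = appendOffset t (v + const _ e) := by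
  ext k
  induction k using Fin.lastCases <;> simp [appendOffset, add_right_comm]

theorem mem_iff_init_mem_offsetSlice {F : Set (Fin (n + 2) → α)} {w : Fin (n + 2) → α} :
    w ∈ F ↔ Fin.init w ∈ offsetSlice F (w (Fin.last _) - w 0) := by
  have : appendOffset (w (Fin.last _) - w 0) (Fin.init w) = w := by
    simp [appendOffset, Fin.init]
  simp [offsetSlice, this]

theorem IsIntersecting.offsetSlice {F : Set (Fin (n + 2) → α)} (hF : IsIntersecting F) (t : α) :
    IsIntersecting (offsetSlice F t) := by
  intro v hv w hw
  rcases exists_appendOffset_eq_iff.1 (hF _ hv _ hw) with hk | h0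
  · exact hk
  · exact ⟨0, add_right_cancel h0⟩

theorem MeetsDiagonalCosets.offsetSlice {F : Set (Fin (n + 2) → α)} (hF : MeetsDiagonalCosets F)
    (t : α) : MeetsDiagonalCosets (offsetSlice F t) := by
  intro u
  obtain ⟨e, he⟩ := hF (appendOffset t u)
  exact ⟨e, by rwa [appendOffset_add_const] at he⟩

theorem eq_or_of_forall_exists_appendOffset_eq (hα : 3 ≤ ENat.card α) {i i' : Fin (n + 1)}
    {j j' t s : α} (h : ∀ v w : Fin (n + 1) → α, v i = j → w i' = j' →
      ∃ k, appendOffset t v k = appendOffset s w k) :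
    (i = i' ∧ j = j') ∨ (i = 0 ∧ i' = 0 ∧ j + t = j' + s) := by
  by_contra hne
  obtain ⟨d, hd0, hdst⟩ := ENat.exists_ne_ne_of_three_le hα 0 (s - t)
  obtain ⟨x, hxj, hxst⟩ := ENat.exists_ne_ne_of_three_le hα j (j - (s - t))
  -- `v - w` is `d` off `i`; `d` and `x` are chosen so that `v` and `w` agree nowhere and
  -- `v 0 + t ≠ w 0 + s`.
  set w : Fin (n + 1) → α := fun k => if k = i' then j' else x
  set v : Fin (n + 1) → α := fun k => if k = i then j else w k + d
  have hvw : ∀ k, v k ≠ w k ∧ (k = 0 → v k + t ≠ w k + s) := by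
    intro k
    by_cases hki : k = i
    · subst hki
      by_cases hii' : k = i'
      · subst hii'
        simp only [v, w, if_pos]
        exact ⟨fun hj => hne (Or.inl ⟨rfl, hj⟩), fun hk0 hj => hne (Or.inr ⟨hk0, hk0, hj⟩)⟩
      · simp only [v, w, if_pos, if_neg hii']
        exact ⟨hxj.symm, fun _ => by grind⟩
    · simp only [v, if_neg hki]
      exact ⟨by grind, fun _ => by grind⟩
  rcases exists_appendOffset_eq_iff.1 (h v w (by simp [v]) (by simp [w])) with ⟨k, hk⟩ | h0
  · exact (hvw k).1 hk
  · exact (hvw 0).2 rfl h0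

theorem forall_eq_or_forall_add_eq {β : Type*} (i : α → β) (j : α → α) (b : β)
    (h : ∀ t s, (i t = i s ∧ j t = j s) ∨ (i t = b ∧ i s = b ∧ j t + t = j s + s)) :
    (∀ t, i t = i 0 ∧ j t = j 0) ∨ (∀ t, i t = b ∧ j t + t = j 0) := by
  refine or_iff_not_imp_left.2 fun hne => ?_
  obtain ⟨s, hs⟩ := not_forall.1 hne
  have hs0 : i s = b ∧ j s + s = j 0 := by
    rcases h s 0 with h' | h'
    · exact absurd h' hs
    · exact ⟨h'.1, by simpa using h'.2.2⟩
  intro r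
  rcases h r 0 with h' | h'
  · rcases h r s with h'' | h''
    · exact absurd ⟨h''.1.symm.trans h'.1, h''.2.symm.trans h'.2⟩ hs
    · exact ⟨h''.1, h''.2.2.trans hs0.2⟩
  · exact ⟨h'.1, by simpa using h'.2.2⟩

theorem exists_eq_setOf_apply_eq_fin_one {F : Set (Fin 1 → α)} (hF : IsIntersecting F)
    (hcov : MeetsDiagonalCosets F) : ∃ i j, F = {w | w i = j} := by
  obtain ⟨e, he⟩ := hcov 0
  refine ⟨0, e, Set.ext fun w => ⟨fun hw => ?_, fun hw => ?_⟩⟩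
  · obtain ⟨k, hk⟩ := hF w hw _ he
    simpa [Subsingleton.elim k 0] using hk
  · convert he
    ext k
    simpa [Subsingleton.elim k 0] using hw

theorem exists_eq_setOf_apply_eq (hα : 3 ≤ ENat.card α) :
    ∀ {n : ℕ} {F : Set (Fin (n + 1) → α)}, IsIntersecting F → MeetsDiagonalCosets F →
      ∃ i j, F = {w | w i = j}
  | 0, _, hF, hcov => exists_eq_setOf_apply_eq_fin_one hF hcov
  | n + 1, F, hF, hcov => by
    choose i j hij using fun t =>
      exists_eq_setOf_apply_eq hα (hF.offsetSlice t) (hcov.offsetSlice t)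
    have hcross : ∀ t s, (i t = i s ∧ j t = j s) ∨ (i t = 0 ∧ i s = 0 ∧ j t + t = j s + s) := by
      refine fun t s => eq_or_of_forall_exists_appendOffset_eq hα fun v w hv hw => ?_
      have hv' : v ∈ offsetSlice F t := (hij t).symm ▸ hv
      have hw' : w ∈ offsetSlice F s := (hij s).symm ▸ hw
      exact hF _ hv' _ hw'
    rcases forall_eq_or_forall_add_eq i j 0 hcross with hconst | hshift
    · refine ⟨(i 0).castSucc, j 0, Set.ext fun w => ?_⟩
      rw [mem_iff_init_mem_offsetSlice, hij, (hconst _).1, (hconst _).2]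
      rfl
    · refine ⟨Fin.last _, j 0, Set.ext fun w => ?_⟩
      obtain ⟨hi, hj⟩ := hshift (w (Fin.last _) - w 0)
      rw [mem_iff_init_mem_offsetSlice, hij, hi]
      simp only [Set.mem_ofPred_eq, Fin.init, Fin.castSucc_zero]
      grind

end

end Words

open Words

theorem ekr_words_uniqueness (n q : ℕ) (hq : 3 ≤ q) (hn : 1 ≤ n)
    (F : Finset (Fin n → Fin q))
    (hint : ∀ w ∈ F, ∀ w' ∈ F, ∃ i : Fin n, w i = w' i)
    (hmax : F.card = q ^ (n - 1)) :
    ∃ (i : Fin n) (j : Fin q), F = Finset.univ.filter (fun w : Fin n → Fin q => w i = j) := by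
  have : NeZero q := ⟨by omega⟩
  obtain ⟨m, rfl⟩ : ∃ m, n = m + 1 := ⟨n - 1, by omega⟩
  have hF : IsIntersecting (F : Set (Fin (m + 1) → Fin q)) := hint
  have hcov := meetsDiagonalCosets_of_card_le hF (by simp [hmax, pow_succ])
  obtain ⟨i, j, hij⟩ := exists_eq_setOf_apply_eq (by simpa using hq) hF hcov
  exact ⟨i, j, Finset.coe_injective (by simpa using hij)⟩
end

section
/- Let n ≥ 2. If F ⊆ S_n is a family of permutations such that for any σ, π ∈ F there exists i with σ(i) = π(i), then |F| ≤ (n-1)!. -/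
/-!
The cyclic group `H` generated by an `n`-cycle has order `n` and acts freely on `[n]`, so two
distinct permutations in the same left coset `σH` agree nowhere: `σ i = σ (h i)` forces
`h i = i`, hence `h = 1`. An intersecting family therefore meets each of the `n!/n = (n-1)!`
cosets of `H` at most once.
-/

open Equiv Equiv.Perm Finset

namespace Equiv.Perm

variable {α : Type*} [Fintype α]

def IsIntersecting (F : Finset (Perm α)) : Prop :=
  ∀ σ ∈ F, ∀ π ∈ F, ∃ i, σ i = π i

theorem IsIntersecting.card_le_index {H : Subgroup (Perm α)}
    (hfree : ∀ h ∈ H, ∀ x, h x = x → h = 1) {F : Finset (Perm α)} (hF : IsIntersecting F) :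
    #F ≤ H.index := by
  have hinj : Function.Injective fun σ : F => (σ : Perm α ⧸ H) := by
    rintro ⟨σ, hσ⟩ ⟨π, hπ⟩ hσπ
    obtain ⟨i, hi⟩ := hF σ hσ π hπ
    have hfix : (σ⁻¹ * π) i = i := by rw [mul_apply, ← hi]; exact σ.symm_apply_apply i
    have hone := hfree _ (QuotientGroup.eq.mp hσπ) i hfix
    exact Subtype.ext (inv_mul_eq_one.mp hone)
  calc #F = Nat.card F := (Nat.card_eq_finsetCard F).symm
    _ ≤ H.index := Nat.card_le_card_of_injective _ hinj

theorem index_eq_factorial_of_card_eq {H : Subgroup (Perm α)}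
    (hH : Nat.card H = Fintype.card α) : H.index = (Fintype.card α - 1).factorial := by
  have hmul := H.index_mul_card
  rw [hH, Nat.card_perm, Nat.card_eq_fintype_card] at hmul
  obtain ⟨m, hm⟩ : ∃ m, Fintype.card α = m + 1 :=
    Nat.exists_eq_succ_of_ne_zero fun h0 => by simp [h0] at hmul
  rw [hm, Nat.factorial_succ, mul_comm (m + 1)] at hmul
  rw [hm, Nat.add_sub_cancel]
  exact Nat.eq_of_mul_eq_mul_right m.succ_pos hmul

variable [DecidableEq α]

theorem IsCycle.eq_one_of_mem_zpowers {c : Perm α} (hc : IsCycle c) (hsupp : c.support = univ)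
    {h : Perm α} (hh : h ∈ Subgroup.zpowers c) {x : α} (hx : h x = x) : h = 1 := by
  obtain ⟨k, rfl⟩ := mem_powers_iff_mem_zpowers.mpr hh
  have hcx : c x ≠ x := mem_support.mp (hsupp ▸ mem_univ x)
  exact (hc.pow_eq_one_iff' hcx).mpr hx

theorem IsCycle.card_zpowers {c : Perm α} (hc : IsCycle c) (hsupp : c.support = univ) :
    Nat.card (Subgroup.zpowers c) = Fintype.card α := by
  rw [Nat.card_zpowers, hc.orderOf, hsupp, card_univ]

theorem IsIntersecting.card_le_factorial_of_isCycle {c : Perm α} (hc : IsCycle c)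
    (hsupp : c.support = univ) {F : Finset (Perm α)} (hF : IsIntersecting F) :
    #F ≤ (Fintype.card α - 1).factorial := by
  rw [← index_eq_factorial_of_card_eq (hc.card_zpowers hsupp)]
  exact hF.card_le_index fun _ hh _ hx => hc.eq_one_of_mem_zpowers hsupp hh hx

end Equiv.Perm

theorem ekr_perm_bound (n : ℕ) (hn : 2 ≤ n)
    (F : Finset (Equiv.Perm (Fin n)))
    (hint : ∀ σ ∈ F, ∀ π ∈ F, ∃ i : Fin n, σ i = π i) :
    F.card ≤ (n - 1).factorial := by
  simpa using IsIntersecting.card_le_factorial_of_isCycle (isCycle_finRotate_of_le hn)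
    (support_finRotate_of_le hn) hint
end

section
/- Let n ≥ 2 and fix a perfect matching m' of K_{2n} and an edge e = ij with e ∉ m'. Then the number of perfect matchings m of K_{2n} such that ij ∈ m and m shares at least one edge with m' is strictly less than (2/5)(2n-3)!!. -/
/-!
A matching containing `ij` can share with `m'` only edges of the set `M` of the `n - 2` edges of
`m'` disjoint from `ij`. A matching containing `ij` and a fixed `k`-subset of `M` is completed by
an arbitrary perfect matching of the remaining `2 (n - k - 1)` vertices, so there are
`(2n - 2k - 3)!!` of them. The Bonferroni inequality bounds the count by `S₁ - S₂ + S₃` with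
`S_k = C(n - 2, k) (2n - 2k - 3)!!`, and `S₁ - S₂ + S₃ < (2/5) (2n - 3)!!`: asymptotically the
ratio is `1/2 - 1/8 + 1/48 < 2/5`.
-/

/-- A perfect matching of the complete graph on `2*n` vertices. -/
def IsPerfectMatching (n : ℕ) (m : Finset (Finset (Fin (2 * n)))) : Prop :=
  (∀ e ∈ m, e.card = 2) ∧ ∀ v : Fin (2 * n), ∃! e, e ∈ m ∧ v ∈ e

open Finset Nat

variable {α : Type*} [DecidableEq α]

structure IsPerfectMatchingOn (V : Finset α) (m : Finset (Finset α)) : Prop where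
  card_eq_two : ∀ e ∈ m, #e = 2
  pairwiseDisjoint : (m : Set (Finset α)).PairwiseDisjoint id
  biUnion_eq : m.biUnion id = V

namespace IsPerfectMatchingOn

variable {V : Finset α} {m S : Finset (Finset α)} {e f : Finset α}

theorem subset_of_mem (hm : IsPerfectMatchingOn V m) (he : e ∈ m) : e ⊆ V :=
  hm.biUnion_eq ▸ subset_biUnion_of_mem id he

theorem eq_of_mem_of_mem (hm : IsPerfectMatchingOn V m) (he : e ∈ m) (hf : f ∈ m) {v : α}
    (hve : v ∈ e) (hvf : v ∈ f) : e = f :=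
  hm.pairwiseDisjoint.elim_finset he hf v hve hvf

theorem exists_pair_mem (hm : IsPerfectMatchingOn V m) {v : α} (hv : v ∈ V) :
    ∃ w ∈ V.erase v, {v, w} ∈ m := by
  obtain ⟨e, he, hve : v ∈ e⟩ := mem_biUnion.1 (hm.biUnion_eq ▸ hv)
  obtain ⟨w, hw⟩ := card_eq_one.1 (by rw [card_erase_of_mem hve, hm.card_eq_two e he])
  have hwe : w ∈ e.erase v := hw ▸ mem_singleton_self w
  refine ⟨w, mem_erase.2 ⟨ne_of_mem_erase hwe, hm.subset_of_mem he (mem_of_mem_erase hwe)⟩,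
    ?_⟩
  rwa [← hw, insert_erase hve]

theorem two_mul_card (hm : IsPerfectMatchingOn V m) : 2 * #m = #V := by
  rw [← hm.biUnion_eq, card_biUnion hm.pairwiseDisjoint]
  simp [sum_congr rfl hm.card_eq_two, mul_comm]

theorem singleton (he : #e = 2) : IsPerfectMatchingOn e {e} where
  card_eq_two := by simp [he]
  pairwiseDisjoint := by simp
  biUnion_eq := singleton_biUnion

theorem of_subset (hm : IsPerfectMatchingOn V m) (hS : S ⊆ m) :
    IsPerfectMatchingOn (S.biUnion id) S where
  card_eq_two e he := hm.card_eq_two e (hS he)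
  pairwiseDisjoint := hm.pairwiseDisjoint.subset (coe_subset.2 hS)
  biUnion_eq := rfl

theorem sdiff (hm : IsPerfectMatchingOn V m) (hS : S ⊆ m) :
    IsPerfectMatchingOn (V \ S.biUnion id) (m \ S) where
  card_eq_two e he := hm.card_eq_two e (mem_sdiff.1 he).1
  pairwiseDisjoint := hm.pairwiseDisjoint.subset (coe_subset.2 sdiff_subset)
  biUnion_eq := by
    have hdisj : Disjoint ((m \ S).biUnion id) (S.biUnion id) := by
      simp only [disjoint_biUnion_left, disjoint_biUnion_right]
      intro f hf e he
      exact hm.pairwiseDisjoint (mem_sdiff.1 he).1 (hS hf) fun h => (mem_sdiff.1 he).2 (h ▸ hf)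
    rw [← hm.biUnion_eq, ← sdiff_union_of_subset hS, union_biUnion, sdiff_union_of_subset hS,
      union_sdiff_cancel_right hdisj]

theorem union {A B : Finset α} (hm : IsPerfectMatchingOn A m) (hS : IsPerfectMatchingOn B S)
    (hAB : Disjoint A B) : IsPerfectMatchingOn (A ∪ B) (m ∪ S) where
  card_eq_two e he := (mem_union.1 he).elim (hm.card_eq_two e) (hS.card_eq_two e)
  pairwiseDisjoint := by
    rw [coe_union]
    exact hm.pairwiseDisjoint.union hS.pairwiseDisjoint fun e he f hf _ =>
      hAB.mono (hm.subset_of_mem he) (hS.subset_of_mem hf)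
  biUnion_eq := by rw [union_biUnion, hm.biUnion_eq, hS.biUnion_eq]

theorem disjoint {A B : Finset α} (hm : IsPerfectMatchingOn A m) (hS : IsPerfectMatchingOn B S)
    (hAB : Disjoint A B) : Disjoint m S := by
  refine disjoint_left.2 fun e hem heS => ?_
  obtain ⟨v, hv⟩ : e.Nonempty := card_pos.1 (by rw [hm.card_eq_two e hem]; norm_num)
  exact disjoint_left.1 hAB (hm.subset_of_mem hem hv) (hS.subset_of_mem heS hv)

theorem card_filter_disjoint_add_two (hm : IsPerfectMatchingOn V m) {i j : α} (hi : i ∈ V)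
    (hj : j ∈ V) (hij : i ≠ j) (hnot : {i, j} ∉ m) :
    #{e ∈ m | Disjoint {i, j} e} + 2 = #m := by
  obtain ⟨a, -, hia⟩ := hm.exists_pair_mem hi
  obtain ⟨b, -, hjb⟩ := hm.exists_pair_mem hj
  have hne : ({i, a} : Finset α) ≠ {j, b} := by
    intro h
    have hja : j = a := by
      have hj' : j ∈ ({i, a} : Finset α) := h ▸ mem_insert_self j {b}
      simpa [hij.symm] using hj'
    exact hnot (hja ▸ hia)
  have hmeet : {e ∈ m | ¬Disjoint {i, j} e} = {{i, a}, {j, b}} := by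
    ext e
    simp only [mem_filter, mem_insert, mem_singleton, disjoint_insert_left,
      disjoint_singleton_left, not_and_or, not_not]
    constructor
    · rintro ⟨he, hie | hje⟩
      · exact Or.inl (hm.eq_of_mem_of_mem he hia hie (mem_insert_self i {a}))
      · exact Or.inr (hm.eq_of_mem_of_mem he hjb hje (mem_insert_self j {b}))
    · rintro (rfl | rfl) <;> simp [hia, hjb]
  rw [← card_filter_add_card_filter_not (s := m) (p := Disjoint {i, j}), hmeet, card_pair hne]

theorem inter_filter_disjoint_nonempty_iff (hm : IsPerfectMatchingOn V m) (he : e ∈ m)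
    {m' : Finset (Finset α)} (he' : e ∉ m') :
    (m ∩ {f ∈ m' | Disjoint e f}).Nonempty ↔ ∃ f ∈ m, f ∈ m' := by
  simp only [Finset.Nonempty, mem_inter, mem_filter]
  exact ⟨fun ⟨f, hf, hf', _⟩ => ⟨f, hf, hf'⟩, fun ⟨f, hf, hf'⟩ =>
    ⟨f, hf, hf', hm.pairwiseDisjoint he hf (ne_of_mem_of_not_mem hf' he').symm⟩⟩

end IsPerfectMatchingOn

open scoped Classical in
noncomputable def perfectMatchings (V : Finset α) : Finset (Finset (Finset α)) :=
  {m ∈ V.powerset.powerset | IsPerfectMatchingOn V m}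

theorem mem_perfectMatchings {V : Finset α} {m : Finset (Finset α)} :
    m ∈ perfectMatchings V ↔ IsPerfectMatchingOn V m := by
  classical
  rw [perfectMatchings, mem_filter, mem_powerset, and_iff_right_iff_imp]
  exact fun hm e he => mem_powerset.2 (hm.subset_of_mem he)

theorem card_filter_superset_perfectMatchings {V W : Finset α} {S : Finset (Finset α)}
    (hS : IsPerfectMatchingOn W S) (hWV : W ⊆ V) :
    #{m ∈ perfectMatchings V | S ⊆ m} = #(perfectMatchings (V \ W)) := by
  refine card_nbij' (· \ S) (· ∪ S) (fun m hm => ?_) (fun m hm => ?_) (fun m hm => ?_)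
    (fun m hm => ?_)
  · obtain ⟨hm, hSm⟩ := mem_filter.1 hm
    have := (mem_perfectMatchings.1 hm).sdiff hSm
    rw [hS.biUnion_eq] at this
    exact mem_perfectMatchings.2 this
  · have hm := mem_perfectMatchings.1 hm
    have := hm.union hS sdiff_disjoint
    rw [sdiff_union_of_subset hWV] at this
    exact mem_filter.2 ⟨mem_perfectMatchings.2 this, subset_union_right⟩
  · exact sdiff_union_of_subset (mem_filter.1 hm).2
  · exact union_sdiff_cancel_right ((mem_perfectMatchings.1 hm).disjoint hS sdiff_disjoint)

theorem card_perfectMatchings : ∀ {k : ℕ} {V : Finset α}, #V = 2 * k →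
    #(perfectMatchings V) = (2 * k - 1)‼
  | 0, V, hV => by
    rw [card_eq_zero.1 hV, show (2 * 0 - 1)‼ = 1 from rfl, card_eq_one]
    refine ⟨∅, eq_singleton_iff_unique_mem.2 ⟨mem_perfectMatchings.2 ?_, fun m hm => ?_⟩⟩
    · exact ⟨by simp, by simp, by simp⟩
    · replace hm := mem_perfectMatchings.1 hm
      exact eq_empty_of_forall_notMem fun e he => by
        simpa [subset_empty.1 (hm.subset_of_mem he)] using hm.card_eq_two e he
  | k + 1, V, hV => by
    obtain ⟨v, hv⟩ : V.Nonempty := card_pos.1 (by omega)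
    have hsplit : perfectMatchings V =
        (V.erase v).biUnion fun w => {m ∈ perfectMatchings V | {{v, w}} ⊆ m} := by
      ext m
      simp only [mem_biUnion, mem_filter, singleton_subset_iff]
      exact ⟨fun hm => ((mem_perfectMatchings.1 hm).exists_pair_mem hv).imp fun w hw =>
        ⟨hw.1, hm, hw.2⟩, fun ⟨_, _, hm, _⟩ => hm⟩
    have hdisj : ((V.erase v : Finset α) : Set α).PairwiseDisjoint
        fun w => {m ∈ perfectMatchings V | {{v, w}} ⊆ m} := by
      intro w hw w' hw' hne
      simp only [Function.onFun, disjoint_filter, singleton_subset_iff]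
      intro m hm hvw hvw'
      have hpair := (mem_perfectMatchings.1 hm).eq_of_mem_of_mem hvw hvw'
        (mem_insert_self v {w}) (mem_insert_self v {w'})
      have : w' ∈ ({v, w} : Finset α) := hpair ▸ mem_insert_of_mem (mem_singleton_self w')
      simp [ne_of_mem_erase hw', Ne.symm hne] at this
    have hpiece :
        ∀ w ∈ V.erase v, #{m ∈ perfectMatchings V | {{v, w}} ⊆ m} = (2 * k - 1)‼ := by
      intro w hw
      have hvw : #{v, w} = 2 := card_pair (ne_of_mem_erase hw).symm
      have hvwV : {v, w} ⊆ V := insert_subset hv (singleton_subset_iff.2 (mem_of_mem_erase hw))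
      rw [card_filter_superset_perfectMatchings (.singleton hvw) hvwV, card_perfectMatchings]
      rw [card_sdiff_of_subset hvwV, hvw, hV]
      omega
    rw [hsplit, card_biUnion hdisj, sum_congr rfl hpiece, sum_const, card_erase_of_mem hv, hV,
      smul_eq_mul, show 2 * (k + 1) - 1 = 2 * k + 1 by omega, doubleFactorial_add_one]

theorem IsPerfectMatchingOn.card_filter_mem_and_superset {V e : Finset α}
    {m T : Finset (Finset α)} (hm : IsPerfectMatchingOn V m) (he : #e = 2) (heV : e ⊆ V)
    (hT : T ⊆ {f ∈ m | Disjoint e f}) {k : ℕ} (hV : #V = 2 * (#T + 1 + k)) :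
    #{m' ∈ perfectMatchings V | e ∈ m' ∧ T ⊆ m'} = (2 * k - 1)‼ := by
  have hTm : T ⊆ m := hT.trans (filter_subset _ _)
  have heT : e ∉ T := fun h => by
    rw [(disjoint_self_iff_empty e).1 (mem_filter.1 (hT h)).2, card_empty] at he
    omega
  have hS : IsPerfectMatchingOn (e ∪ T.biUnion id) (insert e T) := by
    rw [insert_eq]
    exact (IsPerfectMatchingOn.singleton he).union (hm.of_subset hTm)
      ((disjoint_biUnion_right _ _ _).2 fun f hf => (mem_filter.1 (hT hf)).2)
  have hSV : e ∪ T.biUnion id ⊆ V :=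
    union_subset heV (biUnion_subset.2 fun f hf => hm.subset_of_mem (hTm hf))
  simp_rw [← insert_subset_iff]
  rw [card_filter_superset_perfectMatchings hS hSV, card_perfectMatchings]
  rw [card_sdiff_of_subset hSV, ← hS.two_mul_card, card_insert_of_notMem heT, hV]
  omega

theorem Nat.ite_pos_add_choose_two_le (t : ℕ) :
    (if 0 < t then 1 else 0) + t.choose 2 ≤ t + t.choose 3 := by
  rcases t with _ | s
  · simp
  · rw [if_pos s.succ_pos,
      show (s + 1).choose 2 = s.choose 1 + s.choose 2 from choose_succ_succ s 1,
      show (s + 1).choose 3 = s.choose 2 + s.choose 3 from choose_succ_succ s 2, choose_one_right]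
    omega

theorem sum_choose_card_inter (P : Finset (Finset α)) (M : Finset α) (k : ℕ) :
    ∑ m ∈ P, (#(m ∩ M)).choose k = ∑ T ∈ M.powersetCard k, #{m ∈ P | T ⊆ m} := by
  simp only [card_filter]
  rw [sum_comm]
  refine sum_congr rfl fun m _ => ?_
  rw [← card_powersetCard, ← card_filter]
  congr 1
  ext T
  simp only [mem_powersetCard, mem_filter, subset_inter_iff]
  tauto

/-- Bonferroni's inequality `#⋃ₑ Aₑ ≤ S₁ - S₂ + S₃` for the events
`Aₑ = {m ∈ P | e ∈ m}`, `e ∈ M`, with `S₂` moved to the left. -/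
theorem card_filter_inter_nonempty_add_le (P : Finset (Finset α)) (M : Finset α) :
    #{m ∈ P | (m ∩ M).Nonempty} + ∑ T ∈ M.powersetCard 2, #{m ∈ P | T ⊆ m} ≤
      ∑ T ∈ M.powersetCard 1, #{m ∈ P | T ⊆ m} +
        ∑ T ∈ M.powersetCard 3, #{m ∈ P | T ⊆ m} := by
  rw [← sum_choose_card_inter, ← sum_choose_card_inter, ← sum_choose_card_inter, card_filter,
    ← sum_add_distrib, ← sum_add_distrib]
  refine sum_le_sum fun m _ => ?_
  simpa only [card_pos, choose_one_right] using Nat.ite_pos_add_choose_two_le #(m ∩ M)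

theorem IsPerfectMatchingOn.card_filter_mem_and_meets_add_le {V : Finset α}
    {m : Finset (Finset α)} (hm : IsPerfectMatchingOn V m) {i j : α} (hi : i ∈ V) (hj : j ∈ V)
    (hij : i ≠ j) (hnot : {i, j} ∉ m) {K : ℕ} (hV : #V = 2 * (K + 2)) :
    #{m' ∈ perfectMatchings V |
        {i, j} ∈ m' ∧ (m' ∩ {e ∈ m | Disjoint {i, j} e}).Nonempty} +
          K.choose 2 * (2 * K - 3)‼ ≤
      K * (2 * K - 1)‼ + K.choose 3 * (2 * K - 5)‼ := by
  set M := {e ∈ m | Disjoint {i, j} e}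
  set P := {m' ∈ perfectMatchings V | {i, j} ∈ m'}
  have hM : #M = K := by
    have h2 : #M + 2 = #m := hm.card_filter_disjoint_add_two hi hj hij hnot
    have := hm.two_mul_card
    omega
  have hsum (k : ℕ) : ∑ T ∈ M.powersetCard k, #{m' ∈ P | T ⊆ m'} =
      K.choose k * (2 * (K + 1 - k) - 1)‼ := by
    have hforced :
        ∀ T ∈ M.powersetCard k, #{m' ∈ P | T ⊆ m'} = (2 * (K + 1 - k) - 1)‼ := by
      intro T hT
      obtain ⟨hTM, hTk⟩ := mem_powersetCard.1 hT
      have := card_le_card hTM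
      rw [filter_filter, hm.card_filter_mem_and_superset (card_pair hij) ?_ hTM]
      · omega
      · exact insert_subset hi (singleton_subset_iff.2 hj)
    rw [sum_congr rfl hforced, sum_const, card_powersetCard, hM, smul_eq_mul]
  have hbonf := card_filter_inter_nonempty_add_le P M
  rwa [hsum, hsum, hsum, filter_filter, show 2 * (K + 1 - 1) - 1 = 2 * K - 1 by omega,
    show 2 * (K + 1 - 2) - 1 = 2 * K - 3 by omega, show 2 * (K + 1 - 3) - 1 = 2 * K - 5 by omega,
    choose_one_right] at hbonf

theorem doubleFactorial_bonferroni_lt (K : ℕ) :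
    5 * (K * (2 * K - 1)‼ + K.choose 3 * (2 * K - 5)‼) <
      2 * (2 * K + 1)‼ + 5 * (K.choose 2 * (2 * K - 3)‼) := by
  match K with
  | 0 | 1 | 2 => decide
  | k + 3 =>
    have h2 : (k + 2) * (k + 3) = 2 * (k + 3).choose 2 := by
      simpa [descFactorial] using descFactorial_eq_factorial_mul_choose (k + 3) 2
    have h3 : (k + 1) * (k + 2) * (k + 3) = 6 * (k + 3).choose 3 := by
      simpa [descFactorial, factorial, mul_assoc] using
        descFactorial_eq_factorial_mul_choose (k + 3) 3
    rw [show 2 * (k + 3) - 1 = 2 * k + 1 + 2 + 2 by omega,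
      show 2 * (k + 3) - 5 = 2 * k + 1 by omega, show 2 * (k + 3) - 3 = 2 * k + 1 + 2 by omega,
      show 2 * (k + 3) + 1 = 2 * k + 1 + 2 + 2 + 2 by omega]
    simp only [doubleFactorial_add_two]
    set D := (2 * k + 1)‼
    have hpoly : 0 < (k ^ 3 + 45 * k ^ 2 + 164 * k + 150) * D := by positivity
    linarith [congrArg (· * ((2 * k + 3) * D)) h2, congrArg (· * D) h3]

theorem isPerfectMatching_iff_isPerfectMatchingOn {n : ℕ}
    {m : Finset (Finset (Fin (2 * n)))} :
    IsPerfectMatching n m ↔ IsPerfectMatchingOn univ m := by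
  refine ⟨fun ⟨hcard, hunique⟩ => ⟨hcard, ?_, ?_⟩,
    fun hm => ⟨hm.card_eq_two, fun v => ?_⟩⟩
  · intro e he f hf hef
    exact disjoint_left.2 fun v hve hvf => hef ((hunique v).unique ⟨he, hve⟩ ⟨hf, hvf⟩)
  · refine eq_univ_of_forall fun v => ?_
    obtain ⟨e, ⟨he, hve⟩, -⟩ := hunique v
    exact mem_biUnion.2 ⟨e, he, hve⟩
  · obtain ⟨e, he, hve : v ∈ e⟩ := mem_biUnion.1 (hm.biUnion_eq ▸ mem_univ v)
    exact ⟨e, ⟨he, hve⟩, fun f ⟨hf, hvf⟩ => hm.eq_of_mem_of_mem hf he hvf hve⟩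

theorem count_matchings_meeting (n : ℕ) (hn : 2 ≤ n)
    (m' : Finset (Finset (Fin (2 * n)))) (hm' : IsPerfectMatching n m')
    (i j : Fin (2 * n)) (hij : i ≠ j)
    (he : ({i, j} : Finset (Fin (2 * n))) ∉ m') :
    5 * Nat.card {m : Finset (Finset (Fin (2 * n))) //
        IsPerfectMatching n m ∧ ({i, j} : Finset (Fin (2 * n))) ∈ m ∧ ∃ e ∈ m, e ∈ m'} <
      2 * Nat.doubleFactorial (2 * n - 3) := by
  obtain ⟨K, rfl⟩ : ∃ K, n = K + 2 := ⟨n - 2, by omega⟩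
  replace hm' := isPerfectMatching_iff_isPerfectMatchingOn.1 hm'
  have hcount :
      Nat.card {m // IsPerfectMatching (K + 2) m ∧ {i, j} ∈ m ∧ ∃ e ∈ m, e ∈ m'} =
        #{m ∈ perfectMatchings univ |
          {i, j} ∈ m ∧ (m ∩ {e ∈ m' | Disjoint {i, j} e}).Nonempty} := by
    rw [← Nat.card_eq_finsetCard]
    refine Nat.card_congr (Equiv.subtypeEquivRight fun m => ?_)
    simp only [mem_filter, mem_perfectMatchings, ← isPerfectMatching_iff_isPerfectMatchingOn]
    refine and_congr_right fun hm => and_congr_right fun hijm => ?_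
    exact ((isPerfectMatching_iff_isPerfectMatchingOn.1 hm).inter_filter_disjoint_nonempty_iff
      hijm he).symm
  have hbound := hm'.card_filter_mem_and_meets_add_le (mem_univ i) (mem_univ j) hij he
    (K := K) (by simp)
  rw [hcount, show 2 * (K + 2) - 3 = 2 * K + 1 by omega]
  linarith [doubleFactorial_bonferroni_lt K]
end

section
/- Let k < n/2 and let F be an intersecting family of k-subsets of [n] with |F| = C(n-1,k-1). For any element j ∈ [n], the number of members of F containing j is at least C(n-2, k-2). -/
theorem ekr_degree_lower_bound (n k : ℕ) (hk : 2 ≤ k) (hn : 2 * k < n)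
    (F : Finset (Finset (Fin n)))
    (hcard : ∀ S ∈ F, S.card = k)
    (hint : ∀ S ∈ F, ∀ T ∈ F, (S ∩ T).Nonempty)
    (hmax : F.card = (n - 1).choose (k - 1)) :
    ∀ j : Fin n, (n - 2).choose (k - 2) ≤ (F.filter fun S => j ∈ S).card := by
  intro j
  obtain ⟨m, rfl⟩ : ∃ m, n = m + 1 := ⟨n - 1, by omega⟩
  set F' : Finset (Finset (Fin (m + 1))) := F.filter (fun S => j ∉ S) with hF'
  have hinj : Function.Injective j.succAbove := Fin.succAbove_right_injective
  set G : Finset (Finset (Fin m)) :=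
    F'.image (fun S => S.preimage j.succAbove hinj.injOn) with hG
  -- recovery lemma
  have hrec : ∀ S ∈ F', (S.preimage j.succAbove hinj.injOn).map
      ⟨j.succAbove, hinj⟩ = S := by
    intro S hS
    have hjS : j ∉ S := (Finset.mem_filter.mp hS).2
    ext x
    simp only [Finset.mem_map, Finset.mem_preimage, Function.Embedding.coeFn_mk]
    constructor
    · rintro ⟨z, hz, rfl⟩; exact hz
    · intro hx
      obtain ⟨z, rfl⟩ := Fin.exists_succAbove_eq (show x ≠ j from fun h => hjS (h ▸ hx))
      exact ⟨z, hx, rfl⟩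
  have hcardG : G.card = F'.card := by
    apply Finset.card_image_of_injOn
    intro S hS T hT h
    have := congrArg (fun A => Finset.map ⟨j.succAbove, hinj⟩ A) h
    simpa [hrec S hS, hrec T hT] using this
  have hsized : (G : Set (Finset (Fin m))).Sized k := by
    intro A hA
    simp only [hG, Finset.coe_image, Set.mem_image, Finset.mem_coe] at hA
    obtain ⟨S, hS, rfl⟩ := hA
    have := congrArg Finset.card (hrec S hS)
    rw [Finset.card_map] at this
    rw [this]
    exact hcard S (Finset.mem_filter.mp hS).1
  have hintG : (G : Set (Finset (Fin m))).Intersecting := by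
    intro A hA B hB
    simp only [hG, Finset.coe_image, Set.mem_image, Finset.mem_coe] at hA hB
    obtain ⟨S, hS, rfl⟩ := hA
    obtain ⟨T, hT, rfl⟩ := hB
    rw [Finset.disjoint_left]
    push_neg
    obtain ⟨x, hx⟩ := hint S (Finset.mem_filter.mp hS).1 T (Finset.mem_filter.mp hT).1
    rw [Finset.mem_inter] at hx
    have hxj : x ≠ j := fun h => (Finset.mem_filter.mp hS).2 (h ▸ hx.1)
    obtain ⟨z, rfl⟩ := Fin.exists_succAbove_eq hxj
    exact ⟨z, Finset.mem_preimage.mpr hx.1, Finset.mem_preimage.mpr hx.2⟩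
  have hekr : G.card ≤ (m - 1).choose (k - 1) :=
    Finset.erdos_ko_rado hintG hsized (by omega)
  have hsplit : F'.card + (F.filter fun S => j ∈ S).card = F.card := by
    have h := Finset.card_filter_add_card_filter_not (s := F) (p := fun S => j ∈ S)
    rw [hF']
    omega
  -- Pascal
  obtain ⟨k', rfl⟩ : ∃ k', k = k' + 2 := ⟨k - 2, by omega⟩
  obtain ⟨m', rfl⟩ : ∃ m', m = m' + 1 := ⟨m - 1, by omega⟩
  have hpascal : (m' + 1).choose (k' + 1) = m'.choose k' + m'.choose (k' + 1) :=
    Nat.choose_succ_succ m' k'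
  simp only [show k' + 2 - 1 = k' + 1 from rfl, show k' + 2 - 2 = k' from rfl,
    show m' + 1 + 1 - 1 = m' + 1 from rfl, show m' + 1 + 1 - 2 = m' from rfl,
    show m' + 1 - 1 = m' from rfl] at hmax hekr ⊢
  omega
end
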